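/- arXiv:1503.03508 — 4 statements merged into one kernel-verified Lean document; each statement's English description precedes it below -/
import Mathlib

section
/- Let 0 < β < 1. For all vectors x, y in ℝ^d with y ≠ 0 and x ≠ y, one has |y|^β + |x−y|^β ≥ |x|^β + (1−β)·(min(|y|, |x−y|))^β. -/
/-! For `0 ≤ a ≤ b` put `t = a / b ∈ [0, 1]`. Bernoulli's inequality `(1 + t) ^ β ≤ 1 + β t`
together with `t ≤ t ^ β` gives `(a + b) ^ β ≤ b ^ β + β b ^ β t ^ β = b ^ β + β a ^ β`, i.e.
`(a + b) ^ β + (1 - β) min(a, b) ^ β ≤ a ^ β + b ^ β`; the triangle inequality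
`‖x‖ ≤ ‖y‖ + ‖x - y‖` and monotonicity of `t ↦ t ^ β` finish the proof. -/

open Real

theorem Real.add_rpow_le_mul_rpow_add_rpow {a b β : ℝ} (ha : 0 ≤ a) (hab : a ≤ b)
    (hβ0 : 0 ≤ β) (hβ1 : β ≤ 1) : (a + b) ^ β ≤ β * a ^ β + b ^ β := by
  obtain rfl | hb := (ha.trans hab).eq_or_lt
  · obtain rfl : a = 0 := le_antisymm hab ha
    simp only [add_zero, le_add_iff_nonneg_left]
    positivity
  set t := a / b
  have ht0 : 0 ≤ t := div_nonneg ha hb.le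
  have ht1 : t ≤ 1 := div_le_one_of_le₀ hab hb.le
  have hbt : b * t = a := mul_div_cancel₀ a hb.ne'
  calc (a + b) ^ β = b ^ β * (1 + t) ^ β := by
        rw [← mul_rpow hb.le (by positivity), mul_one_add, hbt, add_comm]
    _ ≤ b ^ β * (1 + β * t) := by
        gcongr
        exact rpow_one_add_le_one_add_mul_self (by linarith) hβ0 hβ1
    _ ≤ b ^ β * (1 + β * t ^ β) := by
        gcongr
        exact self_le_rpow_of_le_one ht0 ht1 hβ1
    _ = β * a ^ β + b ^ β := by
        rw [← hbt, mul_rpow hb.le ht0]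
        ring

theorem Real.add_rpow_add_mul_min_rpow_le {a b β : ℝ} (ha : 0 ≤ a) (hb : 0 ≤ b)
    (hβ0 : 0 ≤ β) (hβ1 : β ≤ 1) :
    (a + b) ^ β + (1 - β) * min a b ^ β ≤ a ^ β + b ^ β := by
  rcases le_total a b with hab | hba
  · rw [min_eq_left hab]
    linarith [add_rpow_le_mul_rpow_add_rpow ha hab hβ0 hβ1]
  · rw [min_eq_right hba, add_comm a]
    linarith [add_rpow_le_mul_rpow_add_rpow hb hba hβ0 hβ1]

theorem norm_rpow_add_mul_min_rpow_le {E : Type*} [SeminormedAddCommGroup E] (x y : E)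
    {β : ℝ} (hβ0 : 0 ≤ β) (hβ1 : β ≤ 1) :
    ‖x‖ ^ β + (1 - β) * min ‖y‖ ‖x - y‖ ^ β ≤ ‖y‖ ^ β + ‖x - y‖ ^ β := by
  have hx : ‖x‖ ^ β ≤ (‖y‖ + ‖x - y‖) ^ β := by
    gcongr
    exact norm_le_insert' x y
  linarith [add_rpow_add_mul_min_rpow_le (norm_nonneg y) (norm_nonneg (x - y)) hβ0 hβ1]

theorem stmt0_general (d : ℕ) (β : ℝ) (hβ0 : 0 < β) (hβ1 : β < 1)
    (x y : EuclideanSpace ℝ (Fin d)) :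
    ‖x‖ ^ β + (1 - β) * (min ‖y‖ ‖x - y‖) ^ β ≤ ‖y‖ ^ β + ‖x - y‖ ^ β :=
  norm_rpow_add_mul_min_rpow_le x y hβ0.le hβ1.le

theorem stmt0 (d : ℕ) (β : ℝ) (hβ0 : 0 < β) (hβ1 : β < 1)
    (x y : EuclideanSpace ℝ (Fin d)) (hy : y ≠ 0) (hxy : x ≠ y) :
    ‖x‖ ^ β + (1 - β) * (min ‖y‖ ‖x - y‖) ^ β ≤ ‖y‖ ^ β + ‖x - y‖ ^ β :=
  stmt0_general d β hβ0 hβ1 x y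
end

section
/- Let d ≥ 1 and δ > 0, and let ν(x) = |x|^{−d−δ} for |x| ≥ 1. Then there exists C > 0 such that for all x with |x| ≥ 1: ∫_{|x−y|>1, |y|>1} ν(x−y) ν(y) dy ≤ C ν(x). (Polynomially decaying Lévy densities satisfy the jump-paring condition.) -/
open MeasureTheory

theorem stmt12 (d : ℕ) (hd : 0 < d) (δ : ℝ) (hδ : 0 < δ)
    (ν : EuclideanSpace ℝ (Fin d) → ℝ)
    (hν : ∀ x : EuclideanSpace ℝ (Fin d), 1 ≤ ‖x‖ → ν x = ‖x‖ ^ (-((d : ℝ) + δ))) :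
    ∃ C > 0, ∀ x : EuclideanSpace ℝ (Fin d), 1 ≤ ‖x‖ →
      ∫ y in {y | 1 < ‖x - y‖ ∧ 1 < ‖y‖}, ν (x - y) * ν y ≤ C * ν x := by
  let E := EuclideanSpace ℝ (Fin d)
  set p : ℝ := (d : ℝ) + δ with hp_def
  have hp_pos : 0 < p := by positivity
  -- the truncated kernel
  set g : E → ℝ := fun z => if 1 < ‖z‖ then ‖z‖ ^ (-p) else 0 with hg_def
  have hg_nonneg : ∀ z, 0 ≤ g z := by
    intro z
    simp only [hg_def]
    split
    · exact Real.rpow_nonneg (norm_nonneg _) _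
    · exact le_rfl
  have hg_meas : Measurable g := by
    apply Measurable.ite
    · exact measurableSet_lt measurable_const measurable_norm
    · exact measurable_norm.pow_const _
    · exact measurable_const
  -- g is integrable, by comparison with (1+‖z‖)^(-p)
  have hfinrank : (Module.finrank ℝ E : ℝ) < p := by
    have : Module.finrank ℝ E = d := by
      simp [E, finrank_euclideanSpace]
    rw [this]
    simpa [hp_def] using hδ
  have hint1 : Integrable (fun z : E => (1 + ‖z‖) ^ (-p)) := integrable_one_add_norm hfinrank
  have hg_int : Integrable g := by
    refine (hint1.const_mul ((2 : ℝ) ^ p)).mono' hg_meas.aestronglyMeasurable ?_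
    filter_upwards with z
    rw [Real.norm_eq_abs, abs_of_nonneg (hg_nonneg z)]
    simp only [hg_def]
    split
    · rename_i hz
      have hz0 : (0 : ℝ) < ‖z‖ := lt_trans one_pos hz
      have h1 : 1 + ‖z‖ ≤ 2 * ‖z‖ := by linarith
      have h2 : (2 * ‖z‖) ^ (-p) ≤ (1 + ‖z‖) ^ (-p) :=
        Real.rpow_le_rpow_of_nonpos (by positivity) h1 (by linarith)
      calc ‖z‖ ^ (-p) = (2 : ℝ) ^ p * (2 * ‖z‖) ^ (-p) := by
            rw [Real.mul_rpow (by norm_num) (le_of_lt hz0), ← mul_assoc,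
              ← Real.rpow_add (by norm_num : (0:ℝ) < 2)]
            simp
        _ ≤ (2 : ℝ) ^ p * (1 + ‖z‖) ^ (-p) := by
            exact mul_le_mul_of_nonneg_left h2 (by positivity)
    · positivity
  set I : ℝ := ∫ z, g z with hI_def
  have hI_nonneg : 0 ≤ I := integral_nonneg hg_nonneg
  refine ⟨(2 : ℝ) ^ p * (2 * I + 1), by positivity, ?_⟩
  intro x hx
  have hx0 : (0 : ℝ) < ‖x‖ := lt_of_lt_of_le one_pos hx
  have hνx : ν x = ‖x‖ ^ (-p) := hν x hx
  have hνx_pos : 0 < ν x := by rw [hνx]; positivity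
  set S : Set E := {y | 1 < ‖x - y‖ ∧ 1 < ‖y‖} with hS_def
  have hS_meas : MeasurableSet S := by
    apply MeasurableSet.inter
    · exact measurableSet_lt measurable_const ((measurable_const.sub measurable_id).norm)
    · exact measurableSet_lt measurable_const measurable_norm
  -- the majorant
  set h : E → ℝ := fun y => (2 : ℝ) ^ p * ‖x‖ ^ (-p) * (g (x - y) + g y) with hh_def
  -- g ∘ (x - ·) is integrable
  have hmp : MeasurePreserving (fun y : E => x - y) volume volume :=
    ⟨measurable_const.sub measurable_id, Measure.map_sub_left_eq_self volume x⟩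
  have hgsub_int : Integrable (fun y : E => g (x - y)) :=
    (hmp.integrable_comp hg_int.aestronglyMeasurable).mpr hg_int
  have hh_int : Integrable h := by
    exact ((hgsub_int.add hg_int).const_mul _)
  have hh_nonneg : ∀ y, 0 ≤ h y := by
    intro y
    have := hg_nonneg (x - y)
    have := hg_nonneg y
    simp only [hh_def]
    positivity
  -- pointwise bound on S
  have hbound : ∀ y ∈ S, ν (x - y) * ν y ≤ h y := by
    intro y hy
    obtain ⟨hy1, hy2⟩ := hy
    rw [hν _ (le_of_lt hy1), hν _ (le_of_lt hy2)]
    have hkey : ∀ a : ℝ, ‖x‖ / 2 ≤ a → a ^ (-p) ≤ (2 : ℝ) ^ p * ‖x‖ ^ (-p) := by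
      intro a ha
      have hhalf : (0 : ℝ) < ‖x‖ / 2 := by positivity
      have h1 : a ^ (-p) ≤ (‖x‖ / 2) ^ (-p) :=
        Real.rpow_le_rpow_of_nonpos hhalf ha (by linarith)
      have h2 : (‖x‖ / 2) ^ (-p) = (2 : ℝ) ^ p * ‖x‖ ^ (-p) := by
        rw [div_eq_mul_inv, Real.mul_rpow (norm_nonneg x) (by norm_num),
          Real.inv_rpow (by norm_num), ← Real.rpow_neg (by norm_num : (0:ℝ) ≤ 2), neg_neg,
          mul_comm]
      linarith
    have htri : ‖x‖ ≤ ‖x - y‖ + ‖y‖ := by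
      calc ‖x‖ = ‖(x - y) + y‖ := by rw [sub_add_cancel]
        _ ≤ ‖x - y‖ + ‖y‖ := norm_add_le _ _
    have hgxy : g (x - y) = ‖x - y‖ ^ (-p) := by simp only [hg_def]; rw [if_pos hy1]
    have hgy : g y = ‖y‖ ^ (-p) := by simp only [hg_def]; rw [if_pos hy2]
    rcases le_or_gt (‖x‖ / 2) ‖y‖ with hcase | hcase
    · -- ‖y‖ large: bound ν y
      have hb := hkey _ hcase
      have h1 : ‖x - y‖ ^ (-p) * ‖y‖ ^ (-p) ≤ ‖x - y‖ ^ (-p) * ((2:ℝ) ^ p * ‖x‖ ^ (-p)) :=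
        mul_le_mul_of_nonneg_left hb (Real.rpow_nonneg (norm_nonneg _) _)
      calc ‖x - y‖ ^ (-p) * ‖y‖ ^ (-p)
          ≤ ‖x - y‖ ^ (-p) * ((2:ℝ) ^ p * ‖x‖ ^ (-p)) := h1
        _ = (2:ℝ) ^ p * ‖x‖ ^ (-p) * g (x - y) := by rw [hgxy]; ring
        _ ≤ h y := by
            simp only [hh_def]
            have := hg_nonneg y
            nlinarith [hg_nonneg (x - y), Real.rpow_nonneg (norm_nonneg x) (-p),
              Real.rpow_nonneg (show (0:ℝ) ≤ 2 by norm_num) p]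
    · -- ‖x - y‖ large
      have hcase2 : ‖x‖ / 2 ≤ ‖x - y‖ := by linarith
      have hb := hkey _ hcase2
      have h1 : ‖x - y‖ ^ (-p) * ‖y‖ ^ (-p) ≤ ((2:ℝ) ^ p * ‖x‖ ^ (-p)) * ‖y‖ ^ (-p) :=
        mul_le_mul_of_nonneg_right hb (Real.rpow_nonneg (norm_nonneg _) _)
      calc ‖x - y‖ ^ (-p) * ‖y‖ ^ (-p)
          ≤ ((2:ℝ) ^ p * ‖x‖ ^ (-p)) * ‖y‖ ^ (-p) := h1
        _ = (2:ℝ) ^ p * ‖x‖ ^ (-p) * g y := by rw [hgy]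
        _ ≤ h y := by
            simp only [hh_def]
            nlinarith [hg_nonneg (x - y), hg_nonneg y, Real.rpow_nonneg (norm_nonneg x) (-p),
              Real.rpow_nonneg (show (0:ℝ) ≤ 2 by norm_num) p]
  -- the integrand is measurable
  have hF_meas : Measurable (fun y : E => ‖x - y‖ ^ (-p) * ‖y‖ ^ (-p)) :=
    (((measurable_const.sub measurable_id).norm).pow_const _).mul (measurable_norm.pow_const _)
  -- integrand agrees with F on S
  have hcongr : ∫ y in S, ν (x - y) * ν y = ∫ y in S, ‖x - y‖ ^ (-p) * ‖y‖ ^ (-p) := by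
    apply setIntegral_congr_fun hS_meas
    intro y hy
    dsimp only
    rw [hν _ (le_of_lt hy.1), hν _ (le_of_lt hy.2)]
  -- F is integrable on S (dominated by h)
  have hF_intS : IntegrableOn (fun y : E => ‖x - y‖ ^ (-p) * ‖y‖ ^ (-p)) S := by
    refine (hh_int.restrict (s := S)).mono' hF_meas.aestronglyMeasurable ?_
    rw [ae_restrict_iff' hS_meas]
    filter_upwards with y hy
    rw [Real.norm_eq_abs, abs_of_nonneg (by positivity)]
    have := hbound y hy
    rwa [hν _ (le_of_lt hy.1), hν _ (le_of_lt hy.2)] at this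
  have hstep1 : ∫ y in S, ‖x - y‖ ^ (-p) * ‖y‖ ^ (-p) ≤ ∫ y in S, h y := by
    apply setIntegral_mono_on hF_intS (hh_int.restrict) hS_meas
    intro y hy
    have := hbound y hy
    rwa [hν _ (le_of_lt hy.1), hν _ (le_of_lt hy.2)] at this
  have hstep2 : ∫ y in S, h y ≤ ∫ y, h y := by
    apply setIntegral_le_integral hh_int
    filter_upwards with y using hh_nonneg y
  have hstep3 : ∫ y, h y = (2:ℝ) ^ p * ‖x‖ ^ (-p) * (I + I) := by
    simp only [hh_def]
    rw [integral_const_mul, integral_add hgsub_int hg_int]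
    congr 2
    exact integral_sub_left_eq_self g volume x
  calc ∫ y in S, ν (x - y) * ν y
      = ∫ y in S, ‖x - y‖ ^ (-p) * ‖y‖ ^ (-p) := hcongr
    _ ≤ ∫ y, h y := le_trans hstep1 hstep2
    _ = (2:ℝ) ^ p * ‖x‖ ^ (-p) * (I + I) := hstep3
    _ ≤ (2:ℝ) ^ p * (2 * I + 1) * ν x := by
        rw [hνx]
        nlinarith [Real.rpow_nonneg (norm_nonneg x) (-p),
          Real.rpow_nonneg (show (0:ℝ) ≤ 2 by norm_num) p, hI_nonneg,
          Real.rpow_pos_of_pos hx0 (-p), Real.rpow_pos_of_pos (show (0:ℝ) < 2 by norm_num) p]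
end

section
/- Let c > 0 and δ > (d+1)/2, and set g(r) = e^{−cr} r^{−δ} for r > 0. Then there exist constants C₃₅, C₃₆ > 0 such that for every s₂ > 2s₁ ≥ 2 one has: (i) with x = (s₂,0,…,0), y = (s₁,0,…,0) ∈ ℝ^d, g(|x−y|)/g(|x|) ≥ C₃₆ e^{c s₁}; consequently no uniform bound of the form g(|x−y|) ≤ κ g(|x|) can hold for all |y| ≤ s₁, |x| ≥ s₂ with κ independent of s₁. -/
open Real

lemma single_sub' {d : ℕ} (i : Fin d) (a b : ℝ) :
    EuclideanSpace.single i a - EuclideanSpace.single i b =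
      EuclideanSpace.single i (a - b) := by
  ext j
  simp [EuclideanSpace.single_apply]
  split <;> simp

lemma key_ineq (c δ : ℝ) (hc : 0 < c) (hδ : 0 < δ) (s₁ s₂ : ℝ)
    (h1 : 1 ≤ s₁) (h2 : 2 * s₁ < s₂) :
    Real.exp (c * s₁) * (Real.exp (-c * s₂) * s₂ ^ (-δ)) ≤
      Real.exp (-c * (s₂ - s₁)) * (s₂ - s₁) ^ (-δ) := by
  have hs1 : 0 < s₁ := lt_of_lt_of_le one_pos h1
  have hsub : 0 < s₂ - s₁ := by linarith
  have hle : s₂ - s₁ ≤ s₂ := by linarith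
  have hpow : s₂ ^ (-δ) ≤ (s₂ - s₁) ^ (-δ) :=
    Real.rpow_le_rpow_of_nonpos hsub hle (by linarith)
  have hexp : Real.exp (c * s₁) * Real.exp (-c * s₂) = Real.exp (-c * (s₂ - s₁)) := by
    rw [← Real.exp_add]; ring_nf
  calc Real.exp (c * s₁) * (Real.exp (-c * s₂) * s₂ ^ (-δ))
      = (Real.exp (c * s₁) * Real.exp (-c * s₂)) * s₂ ^ (-δ) := by ring
    _ = Real.exp (-c * (s₂ - s₁)) * s₂ ^ (-δ) := by rw [hexp]
    _ ≤ Real.exp (-c * (s₂ - s₁)) * (s₂ - s₁) ^ (-δ) := by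
        exact mul_le_mul_of_nonneg_left hpow (Real.exp_pos _).le

theorem stmt14 (d : ℕ) (hd : 0 < d) (c δ : ℝ) (hc : 0 < c)
    (hδ : ((d : ℝ) + 1) / 2 < δ)
    (g : ℝ → ℝ) (hg : ∀ r > 0, g r = Real.exp (-c * r) * r ^ (-δ)) :
    ∃ C₃₆ > 0,
      (∀ s₁ s₂ : ℝ, 1 ≤ s₁ → 2 * s₁ < s₂ →
        C₃₆ * Real.exp (c * s₁) ≤
          g ‖EuclideanSpace.single (⟨0, hd⟩ : Fin d) s₂ -
              EuclideanSpace.single (⟨0, hd⟩ : Fin d) s₁‖ /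
            g ‖EuclideanSpace.single (⟨0, hd⟩ : Fin d) s₂‖) ∧
      ¬ ∃ κ : ℝ, ∀ s₁ s₂ : ℝ, 1 ≤ s₁ → 2 * s₁ < s₂ →
          ∀ x y : EuclideanSpace ℝ (Fin d),
            ‖y‖ ≤ s₁ → s₂ ≤ ‖x‖ → g ‖x - y‖ ≤ κ * g ‖x‖ := by
  have hδ0 : 0 < δ := by
    have : (0:ℝ) ≤ (d:ℝ) := Nat.cast_nonneg d
    nlinarith
  -- general ratio facts
  have hmain : ∀ s₁ s₂ : ℝ, 1 ≤ s₁ → 2 * s₁ < s₂ →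
      Real.exp (c * s₁) * g s₂ ≤ g (s₂ - s₁) ∧ 0 < g s₂ := by
    intro s₁ s₂ h1 h2
    have hs1 : 0 < s₁ := lt_of_lt_of_le one_pos h1
    have hs2 : 0 < s₂ := by linarith
    have hsub : 0 < s₂ - s₁ := by linarith
    rw [hg s₂ hs2, hg (s₂ - s₁) hsub]
    exact ⟨key_ineq c δ hc hδ0 s₁ s₂ h1 h2,
      mul_pos (Real.exp_pos _) (Real.rpow_pos_of_pos hs2 _)⟩
  refine ⟨1, one_pos, ?_, ?_⟩
  · intro s₁ s₂ h1 h2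
    have hs1 : 0 < s₁ := lt_of_lt_of_le one_pos h1
    have hs2 : 0 < s₂ := by linarith
    have hsub : 0 < s₂ - s₁ := by linarith
    rw [single_sub', EuclideanSpace.norm_single, EuclideanSpace.norm_single,
      Real.norm_eq_abs, Real.norm_eq_abs, abs_of_pos hsub, abs_of_pos hs2]
    obtain ⟨hle, hpos⟩ := hmain s₁ s₂ h1 h2
    rw [one_mul, le_div_iff₀ hpos]
    linarith [hle]
  · rintro ⟨κ, hκ⟩
    -- choose s₁ large enough that exp (c * s₁) > κ
    set s₁ : ℝ := max 1 (Real.log (max κ 1) / c + 1) with hs₁def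
    have h1 : 1 ≤ s₁ := le_max_left _ _
    have hs1 : 0 < s₁ := lt_of_lt_of_le one_pos h1
    set s₂ : ℝ := 2 * s₁ + 1 with hs₂def
    have h2 : 2 * s₁ < s₂ := by simp [hs₂def]
    have hs2 : 0 < s₂ := by linarith
    have hsub : 0 < s₂ - s₁ := by linarith
    have hx : ‖EuclideanSpace.single (⟨0, hd⟩ : Fin d) s₂‖ = s₂ := by
      rw [EuclideanSpace.norm_single, Real.norm_eq_abs, abs_of_pos hs2]
    have hy : ‖EuclideanSpace.single (⟨0, hd⟩ : Fin d) s₁‖ = s₁ := by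
      rw [EuclideanSpace.norm_single, Real.norm_eq_abs, abs_of_pos hs1]
    have hb := hκ s₁ s₂ h1 h2 (EuclideanSpace.single (⟨0, hd⟩ : Fin d) s₂)
      (EuclideanSpace.single (⟨0, hd⟩ : Fin d) s₁) (le_of_eq hy) (ge_of_eq hx)
    rw [single_sub', EuclideanSpace.norm_single, Real.norm_eq_abs, abs_of_pos hsub,
      hx] at hb
    obtain ⟨hle, hpos⟩ := hmain s₁ s₂ h1 h2
    have hκlt : κ < Real.exp (c * s₁) := by
      have hκle : κ ≤ max κ 1 := le_max_left _ _
      have h1le : (0:ℝ) < max κ 1 := lt_of_lt_of_le one_pos (le_max_right _ _)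
      have : Real.log (max κ 1) < c * s₁ := by
        have hs1' : Real.log (max κ 1) / c + 1 ≤ s₁ := le_max_right _ _
        have := (div_le_iff₀ hc).mp (by linarith : Real.log (max κ 1) / c ≤ s₁ - 1)
        nlinarith
      calc κ ≤ max κ 1 := hκle
        _ = Real.exp (Real.log (max κ 1)) := (Real.exp_log h1le).symm
        _ < Real.exp (c * s₁) := Real.exp_lt_exp.mpr this
    have : κ * g s₂ < Real.exp (c * s₁) * g s₂ :=
      mul_lt_mul_of_pos_right hκlt hpos
    linarith
end

section
/- Let d ≥ 1 and let k, q : ℝ^d → [0,∞) be integrable functions each of which is radial and non-increasing (i.e., k(x) = k₀(|x|) and q(x) = q₀(|x|) with k₀, q₀ non-increasing on [0,∞)). Then the convolution k * q is also radial and non-increasing: for all x, y ∈ ℝ^d with |x| ≥ |y|, (k*q)(x) ≤ (k*q)(y). -/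
/-!
Let `σ` be the reflection in the perpendicular bisector of `x` and `y`. It preserves volume and
exchanges `x` and `y`, so pairing `z` with `σ z` shows that `(k * q)(y) - (k * q)(x)` is half the
integral of `(k (y - z) - k (x - z)) * (q z - q (σ z))`. As `‖y‖ ≤ ‖x‖`, the origin lies on the
side of `y`; if `z` does too, then `‖z‖ ≤ ‖σ z‖` and both factors are nonnegative, and otherwise
both are nonpositive.
-/

open MeasureTheory RealInnerProductSpace

noncomputable def conv17 (d : ℕ) (f g : EuclideanSpace ℝ (Fin d) → ℝ)
    (x : EuclideanSpace ℝ (Fin d)) : ℝ :=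
  ∫ y, f (x - y) * g y

section Reflection

variable {E : Type*} [NormedAddCommGroup E] [InnerProductSpace ℝ E]

theorem norm_reflection_orthogonal_singleton_sub_sq (u w v : E) :
    ‖(ℝ ∙ u)ᗮ.reflection w - v‖ ^ 2 = ‖w - v‖ ^ 2 + 4 * ⟪w, u⟫ * ⟪v, u⟫ / ‖u‖ ^ 2 := by
  have hρ : (ℝ ∙ u)ᗮ.reflection w = w - (2 * ⟪w, u⟫ / ‖u‖ ^ 2) • u := by
    rw [Submodule.reflection_orthogonal_apply, Submodule.reflection_singleton_apply,
      real_inner_comm]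
    simp only [RCLike.ofReal_real_eq_id, id_eq]
    module
  have hsq : (⟪w, u⟫ / ‖u‖ ^ 2) ^ 2 * ‖u‖ ^ 2 = ⟪w, u⟫ / ‖u‖ ^ 2 * ⟪w, u⟫ := by
    rcases eq_or_ne ‖u‖ 0 with h | h
    · simp [h]
    · field_simp
  rw [hρ, sub_right_comm, norm_sub_sq_real, inner_smul_right, norm_smul, mul_pow,
    Real.norm_eq_abs, sq_abs, inner_sub_left]
  linear_combination 4 * hsq

noncomputable def perpBisectorReflection (x y z : E) : E :=
  (ℝ ∙ (x - y))ᗮ.reflection (z - midpoint ℝ x y) + midpoint ℝ x y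

variable (x y : E)

theorem perpBisectorReflection_involutive : Function.Involutive (perpBisectorReflection x y) := by
  intro z
  simp [perpBisectorReflection]

theorem perpBisectorReflection_left : perpBisectorReflection x y x = y := by
  have h : ‖x - midpoint ℝ x y‖ = ‖y - midpoint ℝ x y‖ := by
    rw [← dist_eq_norm, ← dist_eq_norm, dist_left_midpoint, dist_right_midpoint, dist_comm]
  have hρ := Submodule.reflection_sub h
  rw [sub_sub_sub_cancel_right] at hρ
  rw [perpBisectorReflection, hρ, sub_add_cancel]

theorem norm_perpBisectorReflection_sub_sq (z p : E) :
    ‖perpBisectorReflection x y z - p‖ ^ 2 = ‖z - p‖ ^ 2 +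
      4 * ⟪z - midpoint ℝ x y, x - y⟫ * ⟪p - midpoint ℝ x y, x - y⟫ / ‖x - y‖ ^ 2 := by
  rw [perpBisectorReflection, add_sub_assoc, ← neg_sub p, ← sub_eq_add_neg,
    norm_reflection_orthogonal_singleton_sub_sq, sub_sub_sub_cancel_right]

theorem norm_perpBisectorReflection_sub_perpBisectorReflection (a b : E) :
    ‖perpBisectorReflection x y a - perpBisectorReflection x y b‖ = ‖a - b‖ := by
  rw [perpBisectorReflection, perpBisectorReflection, add_sub_add_right_eq_sub, ← map_sub,
    LinearIsometryEquiv.norm_map, sub_sub_sub_cancel_right]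

theorem perpBisectorReflection_right : perpBisectorReflection x y y = x := by
  have h := perpBisectorReflection_involutive x y x
  rwa [perpBisectorReflection_left] at h

theorem norm_left_sub_perpBisectorReflection (z : E) :
    ‖x - perpBisectorReflection x y z‖ = ‖y - z‖ := by
  rw [← norm_perpBisectorReflection_sub_perpBisectorReflection x y y z,
    perpBisectorReflection_right]

theorem norm_right_sub_perpBisectorReflection (z : E) :
    ‖y - perpBisectorReflection x y z‖ = ‖x - z‖ := by
  rw [← norm_perpBisectorReflection_sub_perpBisectorReflection x y x z,
    perpBisectorReflection_left]

theorem norm_perpBisectorReflection_sub_sq_mul_nonneg (hxy : ‖y‖ ≤ ‖x‖) (z : E) :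
    0 ≤ (‖x - z‖ ^ 2 - ‖y - z‖ ^ 2) * (‖perpBisectorReflection x y z‖ ^ 2 - ‖z‖ ^ 2) := by
  have hz := norm_perpBisectorReflection_sub_sq x y z 0
  have hyz := norm_perpBisectorReflection_sub_sq x y x z
  have hy := norm_perpBisectorReflection_sub_sq x y x 0
  simp only [perpBisectorReflection_left, sub_zero] at hz hyz hy
  have hprod : (‖x - z‖ ^ 2 - ‖y - z‖ ^ 2) * (‖perpBisectorReflection x y z‖ ^ 2 - ‖z‖ ^ 2) =
      (‖x‖ ^ 2 - ‖y‖ ^ 2) * (4 * ⟪z - midpoint ℝ x y, x - y⟫ ^ 2 / ‖x - y‖ ^ 2) := by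
    rw [hz, hyz, hy]; ring
  rw [hprod]
  exact mul_nonneg (sub_nonneg.2 (pow_le_pow_left₀ (norm_nonneg _) hxy 2)) (by positivity)

theorem continuous_perpBisectorReflection : Continuous (perpBisectorReflection x y) := by
  unfold perpBisectorReflection; fun_prop

variable [MeasurableSpace E] [BorelSpace E]

theorem measurableEmbedding_perpBisectorReflection :
    MeasurableEmbedding (perpBisectorReflection x y) :=
  (MeasurableEquiv.ofInvolutive _ (perpBisectorReflection_involutive x y)
    (continuous_perpBisectorReflection x y).measurable).measurableEmbedding

theorem measurePreserving_perpBisectorReflection [FiniteDimensional ℝ E] :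
    MeasurePreserving (perpBisectorReflection x y) :=
  (measurePreserving_add_right volume _).comp <|
    (LinearIsometryEquiv.measurePreserving _).comp (measurePreserving_sub_right volume _)

end Reflection

theorem MeasureTheory.MeasurePreserving.integral_le_integral_of_add_comp_le {α : Type*}
    [MeasurableSpace α] {μ : Measure α} {σ : α → α} (hσ : MeasurePreserving σ μ μ)
    (he : MeasurableEmbedding σ) {F G : α → ℝ} (hF : Integrable F μ) (hG : Integrable G μ)
    (h : ∀ z, F z + F (σ z) ≤ G z + G (σ z)) : ∫ z, F z ∂μ ≤ ∫ z, G z ∂μ := by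
  have hFσ : Integrable (fun z => F (σ z)) μ := (hσ.integrable_comp_emb he).2 hF
  have hGσ : Integrable (fun z => G (σ z)) μ := (hσ.integrable_comp_emb he).2 hG
  have h2 : ∫ z, F z + F (σ z) ∂μ ≤ ∫ z, G z + G (σ z) ∂μ :=
    integral_mono (hF.add hFσ) (hG.add hGσ) h
  rw [integral_add hF hFσ, integral_add hG hGσ, hσ.integral_comp he, hσ.integral_comp he] at h2
  linarith

def RadiallyAntitone {E : Type*} [NormedAddCommGroup E] (f : E → ℝ) : Prop :=
  ∀ x y : E, ‖y‖ ≤ ‖x‖ → f x ≤ f y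

namespace RadiallyAntitone

variable {E : Type*} [NormedAddCommGroup E] {f g : E → ℝ}

theorem apply_le_apply_zero (hf : RadiallyAntitone f) (x : E) : f x ≤ f 0 :=
  hf x 0 (by simp)

theorem apply_eq_of_norm_eq (hf : RadiallyAntitone f) {a b : E} (h : ‖a‖ = ‖b‖) : f a = f b :=
  le_antisymm (hf a b h.ge) (hf b a h.le)

theorem sub_mul_sub_nonneg (hf : RadiallyAntitone f) (hg : RadiallyAntitone g) {a b c d : E}
    (h : 0 ≤ (‖a‖ ^ 2 - ‖b‖ ^ 2) * (‖c‖ ^ 2 - ‖d‖ ^ 2)) :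
    0 ≤ (f b - f a) * (g d - g c) := by
  rcases mul_nonneg_iff.1 h with ⟨hab, hcd⟩ | ⟨hab, hcd⟩
  · rw [sub_nonneg, sq_le_sq₀ (norm_nonneg _) (norm_nonneg _)] at hab hcd
    exact mul_nonneg (sub_nonneg.2 (hf a b hab)) (sub_nonneg.2 (hg c d hcd))
  · rw [sub_nonpos, sq_le_sq₀ (norm_nonneg _) (norm_nonneg _)] at hab hcd
    exact mul_nonneg_of_nonpos_of_nonpos (sub_nonpos.2 (hf b a hab)) (sub_nonpos.2 (hg d c hcd))

end RadiallyAntitone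

section Convolution

variable {E : Type*} [NormedAddCommGroup E] [InnerProductSpace ℝ E] {k q : E → ℝ}

theorem RadiallyAntitone.integrand_add_integrand_perpBisectorReflection_le
    (hk : RadiallyAntitone k) (hq : RadiallyAntitone q) {x y : E} (hxy : ‖y‖ ≤ ‖x‖) (z : E) :
    k (x - z) * q z + k (x - perpBisectorReflection x y z) * q (perpBisectorReflection x y z) ≤
      k (y - z) * q z +
        k (y - perpBisectorReflection x y z) * q (perpBisectorReflection x y z) := by
  rw [hk.apply_eq_of_norm_eq (norm_left_sub_perpBisectorReflection x y z),
    hk.apply_eq_of_norm_eq (norm_right_sub_perpBisectorReflection x y z)]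
  linear_combination
    hk.sub_mul_sub_nonneg hq (norm_perpBisectorReflection_sub_sq_mul_nonneg x y hxy z)

variable [MeasurableSpace E] [BorelSpace E] [FiniteDimensional ℝ E]

theorem integrable_comp_sub_mul (hk0 : ∀ x, 0 ≤ k x) (hk : RadiallyAntitone k)
    (hkm : AEStronglyMeasurable k) (hq : Integrable q) (x : E) :
    Integrable (fun z => k (x - z) * q z) :=
  hq.bdd_mul (hkm.comp_quasiMeasurePreserving
      (Measure.measurePreserving_sub_left volume x).quasiMeasurePreserving)
    (Filter.Eventually.of_forall fun z => by
      rw [Real.norm_eq_abs, abs_of_nonneg (hk0 _)]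
      exact hk.apply_le_apply_zero _)

theorem radiallyAntitone_integral_comp_sub_mul (hk0 : ∀ x, 0 ≤ k x)
    (hkm : AEStronglyMeasurable k) (hqi : Integrable q) (hk : RadiallyAntitone k)
    (hq : RadiallyAntitone q) : RadiallyAntitone fun x => ∫ z, k (x - z) * q z :=
  fun x y hxy =>
    (measurePreserving_perpBisectorReflection x y).integral_le_integral_of_add_comp_le
      (measurableEmbedding_perpBisectorReflection x y) (integrable_comp_sub_mul hk0 hk hkm hqi x)
      (integrable_comp_sub_mul hk0 hk hkm hqi y)
      (hk.integrand_add_integrand_perpBisectorReflection_le hq hxy)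

end Convolution

theorem stmt17_general (d : ℕ) (k q : EuclideanSpace ℝ (Fin d) → ℝ)
    (hknn : ∀ x, 0 ≤ k x)
    (hkint : Integrable k) (hqint : Integrable q)
    (hk : ∀ x y : EuclideanSpace ℝ (Fin d), ‖y‖ ≤ ‖x‖ → k x ≤ k y)
    (hq : ∀ x y : EuclideanSpace ℝ (Fin d), ‖y‖ ≤ ‖x‖ → q x ≤ q y) :
    ∀ x y : EuclideanSpace ℝ (Fin d), ‖y‖ ≤ ‖x‖ →
      conv17 d k q x ≤ conv17 d k q y :=
  radiallyAntitone_integral_comp_sub_mul hknn hkint.aestronglyMeasurable hqint hk hq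

theorem stmt17 (d : ℕ) (k q : EuclideanSpace ℝ (Fin d) → ℝ)
    (hknn : ∀ x, 0 ≤ k x) (hqnn : ∀ x, 0 ≤ q x)
    (hkint : Integrable k) (hqint : Integrable q)
    (hk : ∀ x y : EuclideanSpace ℝ (Fin d), ‖y‖ ≤ ‖x‖ → k x ≤ k y)
    (hq : ∀ x y : EuclideanSpace ℝ (Fin d), ‖y‖ ≤ ‖x‖ → q x ≤ q y) :
    ∀ x y : EuclideanSpace ℝ (Fin d), ‖y‖ ≤ ‖x‖ →
      conv17 d k q x ≤ conv17 d k q y :=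
  stmt17_general d k q hknn hkint hqint hk hq
end
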